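/- arXiv:0902.0708 — 4 statements merged into one kernel-verified Lean document; each statement's English description precedes it below -/
import Mathlib

section
/- For all real numbers m, n with 0 ≤ m ≤ n and m + n > d/2, and any k ∈ ℝ^d, the convolution integral ∫_{ℝ^d} dh / ((1 + |k - h|²)^m (1 + |h|²)^n) is finite (convergent). -/
/-!
Peetre's inequality `1 + ‖x‖² ≤ 2 (1 + ‖x - y‖²) (1 + ‖y‖²)`, raised to the power `-m`, bounds
`(1 + ‖k - h‖²)^(-m)` by a constant (depending on `k`) times `(1 + ‖h‖²)^(-m)`. The integrand is
therefore dominated by a multiple of `(1 + ‖h‖²)^(-(m + n))`, which is integrable as soon as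
`2 (m + n)` exceeds the dimension.
-/

open MeasureTheory Module

theorem rpow_le_rpow_abs_mul_rpow {a b c : ℝ} (ha : 0 < a) (hb : 0 < b)
    (hab : a ≤ c * b) (hba : b ≤ c * a) (r : ℝ) : a ^ r ≤ c ^ |r| * b ^ r := by
  have hc : 0 ≤ c := nonneg_of_mul_nonneg_left (ha.trans_le hab).le hb
  rcases le_or_gt 0 r with hr | hr
  · rw [abs_of_nonneg hr, ← Real.mul_rpow hc hb.le]
    exact Real.rpow_le_rpow ha.le hab hr
  · have hinv : a⁻¹ ≤ c * b⁻¹ := by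
      rw [← div_eq_mul_inv, le_div_iff₀ hb, inv_mul_le_iff₀ ha, mul_comm a]
      exact hba
    rw [abs_of_neg hr, ← neg_neg r, Real.rpow_neg ha.le, ← Real.inv_rpow ha.le,
      Real.rpow_neg hb.le, ← Real.inv_rpow hb.le, neg_neg, ← Real.mul_rpow hc (by positivity)]
    exact Real.rpow_le_rpow (by positivity) hinv (by linarith)

section Peetre

variable {E : Type*} [NormedAddCommGroup E]

theorem one_add_norm_sq_le_two_mul (x y : E) :
    1 + ‖x‖ ^ 2 ≤ 2 * (1 + ‖x - y‖ ^ 2) * (1 + ‖y‖ ^ 2) := by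
  have htri : ‖x‖ ≤ ‖x - y‖ + ‖y‖ := norm_le_norm_sub_add x y
  nlinarith [norm_nonneg x, norm_nonneg (x - y), norm_nonneg y,
    sq_nonneg (‖x - y‖ - ‖y‖), mul_nonneg (sq_nonneg ‖x - y‖) (sq_nonneg ‖y‖)]

theorem one_add_norm_sq_rpow_le (x y : E) (r : ℝ) :
    (1 + ‖x‖ ^ 2) ^ r ≤ (2 * (1 + ‖x - y‖ ^ 2)) ^ |r| * (1 + ‖y‖ ^ 2) ^ r := by
  refine rpow_le_rpow_abs_mul_rpow (by positivity) (by positivity)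
    (one_add_norm_sq_le_two_mul x y) ?_ r
  simpa only [norm_sub_rev] using one_add_norm_sq_le_two_mul y x

end Peetre

theorem integrable_one_div_one_add_norm_sub_sq_rpow_mul {E : Type*} [NormedAddCommGroup E]
    [NormedSpace ℝ E] [FiniteDimensional ℝ E] [MeasurableSpace E] [BorelSpace E]
    {μ : Measure E} [μ.IsAddHaarMeasure] {m n : ℝ} (hmn : (finrank ℝ E : ℝ) < 2 * (m + n))
    (k : E) :
    Integrable (fun h : E => 1 / ((1 + ‖k - h‖ ^ 2) ^ m * (1 + ‖h‖ ^ 2) ^ n)) μ := by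
  set C : ℝ := (2 * (1 + ‖k‖ ^ 2)) ^ |m|
  refine ((integrable_rpow_neg_one_add_norm_sq hmn).const_mul C).mono'
    (Measurable.aestronglyMeasurable (by fun_prop)) (Filter.Eventually.of_forall fun h => ?_)
  have hpeetre : (1 + ‖k - h‖ ^ 2) ^ (-m) ≤ C * (1 + ‖h‖ ^ 2) ^ (-m) := by
    simpa using one_add_norm_sq_rpow_le (k - h) (-h) (-m)
  have hB : (0 : ℝ) < 1 + ‖h‖ ^ 2 := by positivity
  calc ‖1 / ((1 + ‖k - h‖ ^ 2) ^ m * (1 + ‖h‖ ^ 2) ^ n)‖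
      = (1 + ‖k - h‖ ^ 2) ^ (-m) * (1 + ‖h‖ ^ 2) ^ (-n) := by
        rw [Real.norm_of_nonneg (by positivity), one_div, mul_inv,
          Real.rpow_neg (by positivity), Real.rpow_neg hB.le]
    _ ≤ C * (1 + ‖h‖ ^ 2) ^ (-m) * (1 + ‖h‖ ^ 2) ^ (-n) := by gcongr
    _ = C * (1 + ‖h‖ ^ 2) ^ (-(2 * (m + n)) / 2) := by
        rw [mul_assoc, ← Real.rpow_add hB]
        ring_nf

theorem stmt0_general (d : ℕ) (m n : ℝ)
    (hsum : (d : ℝ) / 2 < m + n) (k : EuclideanSpace ℝ (Fin d)) :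
    Integrable (fun h : EuclideanSpace ℝ (Fin d) =>
      1 / ((1 + ‖k - h‖ ^ 2) ^ m * (1 + ‖h‖ ^ 2) ^ n)) := by
  refine integrable_one_div_one_add_norm_sub_sq_rpow_mul ?_ k
  rw [finrank_euclideanSpace_fin]
  linarith

/-- For `0 ≤ m ≤ n`, `m + n > d/2`, and any `k ∈ ℝ^d`, the convolution
integral `∫ dh / ((1+|k-h|²)^m (1+|h|²)^n)` converges. -/
theorem stmt0 (d : ℕ) (hd : 0 < d) (m n : ℝ) (hm : 0 ≤ m) (hmn : m ≤ n)
    (hsum : (d : ℝ) / 2 < m + n) (k : EuclideanSpace ℝ (Fin d)) :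
    Integrable (fun h : EuclideanSpace ℝ (Fin d) =>
      1 / ((1 + ‖k - h‖ ^ 2) ^ m * (1 + ‖h‖ ^ 2) ^ n)) :=
  stmt0_general d m n hsum k
end

section
/- For real α > 0 and μ, ν ∈ ℝ, the ratio Γ(α + μ)/Γ(α + ν) equals α^{μ - ν} (1 + O(1/α)) as α → +∞; i.e., there exist constants C, A > 0 such that |Γ(α + μ)/Γ(α + ν) · α^{ν - μ} − 1| ≤ C/α for all α ≥ A. -/
/-!
Write `R_t(x) = Γ(x + t) / (Γ(x) x^t)`, so that the ratio in question is `R_μ(α) / R_ν(α)` and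
it suffices to show `R_t = 1 + O(1/x)` for every real `t`. For `t ∈ [0, 1]`, log-convexity of `Γ`
gives Gautschi's inequality `x / (x + t) ≤ R_t(x) ≤ 1`. The functional equation gives
`R_{t+1}(x) = R_t(x) (1 + t/x)`, and functions of the form `1 + O(1/x)` are closed under
products and quotients, so the estimate moves from `t - ⌊t⌋` to `t`.
-/

open Real Set Filter Asymptotics Topology

theorem Gamma_add_le_Gamma_mul_rpow {x u : ℝ} (hx : 0 < x) (hu : u ∈ Icc 0 1) :
    Gamma (x + u) ≤ Gamma x * x ^ u := by
  rcases hu.1.eq_or_lt with rfl | hu0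
  · simp
  rcases hu.2.eq_or_lt with rfl | hu1
  · rw [Gamma_add_one hx.ne', rpow_one, mul_comm]
  have hG := Gamma_pos_of_pos hx
  have h := Gamma_mul_add_mul_le_rpow_Gamma_mul_rpow_Gamma (a := 1 - u) (b := u) hx
    (by linarith : 0 < x + 1) (by linarith) hu0 (by ring)
  rw [show (1 - u) * x + u * (x + 1) = x + u by ring, Gamma_add_one hx.ne'] at h
  calc Gamma (x + u) ≤ Gamma x ^ (1 - u) * (x * Gamma x) ^ u := h
    _ = Gamma x ^ (1 - u + u) * x ^ u := by rw [mul_rpow hx.le hG.le, rpow_add hG]; ring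
    _ = Gamma x * x ^ u := by rw [sub_add_cancel, rpow_one]

noncomputable def gammaRatio (t x : ℝ) : ℝ := Gamma (x + t) / (Gamma x * x ^ t)

theorem gammaRatio_le_one {x u : ℝ} (hx : 0 < x) (hu : u ∈ Icc 0 1) : gammaRatio u x ≤ 1 :=
  div_le_one_of_le₀ (Gamma_add_le_Gamma_mul_rpow hx hu)
    (mul_pos (Gamma_pos_of_pos hx) (rpow_pos_of_pos hx u)).le

theorem div_add_le_gammaRatio {x u : ℝ} (hx : 0 < x) (hu : u ∈ Icc 0 1) :
    x / (x + u) ≤ gammaRatio u x := by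
  have hxu : 0 < x + u := by linarith [hu.1]
  have hup : x * Gamma x ≤ Gamma (x + u) * (x + u) ^ (1 - u) := by
    rw [← Gamma_add_one hx.ne']
    simpa using Gamma_add_le_Gamma_mul_rpow hxu (u := 1 - u)
      ⟨by linarith [hu.2], by linarith [hu.1]⟩
  have hpow : x ^ u ≤ (x + u) ^ u := rpow_le_rpow hx.le (by linarith [hu.1]) hu.1
  rw [gammaRatio, div_le_div_iff₀ hxu (by positivity)]
  calc x * (Gamma x * x ^ u) = x * Gamma x * x ^ u := by ring
    _ ≤ Gamma (x + u) * (x + u) ^ (1 - u) * (x + u) ^ u := by gcongr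
    _ = Gamma (x + u) * (x + u) := by
      rw [mul_assoc, ← rpow_add hxu, sub_add_cancel, rpow_one]

theorem abs_gammaRatio_sub_one_le {x u : ℝ} (hx : 0 < x) (hu : u ∈ Icc 0 1) :
    |gammaRatio u x - 1| ≤ u / x := by
  have hxu : 0 < x + u := by linarith [hu.1]
  have hlow : 1 - u / x ≤ x / (x + u) := by
    have h : x / (x + u) - (1 - u / x) = u ^ 2 / (x * (x + u)) := by field_simp; ring
    linarith [show 0 ≤ u ^ 2 / (x * (x + u)) by positivity]
  rw [abs_sub_comm, abs_of_nonneg (by linarith [gammaRatio_le_one hx hu])]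
  linarith [div_add_le_gammaRatio hx hu]

theorem gammaRatio_add_one {x t : ℝ} (hx : x ≠ 0) (hxt : x + t ≠ 0) :
    gammaRatio (t + 1) x = gammaRatio t x * ((x + t) / x) := by
  simp only [gammaRatio]
  rw [← add_assoc, Gamma_add_one hxt, rpow_add_one hx]
  field_simp

theorem gammaRatio_div_gammaRatio {x μ ν : ℝ} (hx : 0 < x) :
    gammaRatio μ x / gammaRatio ν x = Gamma (x + μ) / Gamma (x + ν) * x ^ (ν - μ) := by
  have hG := (Gamma_pos_of_pos hx).ne'
  simp only [gammaRatio]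
  rw [rpow_sub hx]
  field_simp

section OneAddBigO

variable {α : Type*} {l : Filter α} {f₁ f₂ g : α → ℝ}

theorem isBigO_mul_sub_one (hg : g =O[l] (1 : α → ℝ)) (h₁ : (f₁ - 1) =O[l] g)
    (h₂ : (f₂ - 1) =O[l] g) : (f₁ * f₂ - 1) =O[l] g := by
  have hprod : ((f₁ - 1) * (f₂ - 1)) =O[l] g :=
    (h₁.mul (h₂.trans hg)).trans (isBigO_of_le l fun x => by simp)
  refine ((hprod.add h₁).add h₂).congr' (Eventually.of_forall fun x => ?_) EventuallyEq.rfl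
  simp only [Pi.sub_apply, Pi.mul_apply, Pi.one_apply]
  ring

theorem isBigO_inv_sub_one (hg : Tendsto g l (𝓝 0)) (h₁ : (f₁ - 1) =O[l] g) :
    (f₁⁻¹ - 1) =O[l] g := by
  have hf₁ : Tendsto f₁ l (𝓝 1) := by
    simpa using (h₁.trans_tendsto hg).add_const 1
  have hinv : f₁⁻¹ =O[l] (1 : α → ℝ) := (hf₁.inv₀ one_ne_zero).isBigO_one ℝ
  refine ((h₁.neg_left.mul hinv).congr' ?_ EventuallyEq.rfl).trans
    (isBigO_of_le l fun x => by simp)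
  filter_upwards [hf₁.eventually_ne one_ne_zero] with x hx
  simp only [Pi.sub_apply, Pi.inv_apply, Pi.one_apply]
  field_simp
  ring

theorem isBigO_div_sub_one (hg : Tendsto g l (𝓝 0)) (h₁ : (f₁ - 1) =O[l] g)
    (h₂ : (f₂ - 1) =O[l] g) : (f₁ / f₂ - 1) =O[l] g := by
  rw [div_eq_mul_inv]
  exact isBigO_mul_sub_one (hg.isBigO_one ℝ) h₁ (isBigO_inv_sub_one hg h₂)

end OneAddBigO

theorem isBigO_gammaRatio_add_one_iff (t : ℝ) :
    (gammaRatio (t + 1) - 1) =O[atTop] (·⁻¹) ↔ (gammaRatio t - 1) =O[atTop] (·⁻¹) := by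
  have hinv : Tendsto (fun x : ℝ => x⁻¹) atTop (𝓝 0) := tendsto_inv_atTop_zero
  have hshift : ((fun x : ℝ => (x + t) / x) - 1) =O[atTop] (·⁻¹) := by
    refine ((isBigO_const_mul_self t _ _).congr' ?_ EventuallyEq.rfl)
    filter_upwards [eventually_ne_atTop 0] with x hx
    simp only [Pi.sub_apply, Pi.one_apply]
    field_simp
    ring
  have heq : gammaRatio (t + 1) =ᶠ[atTop] gammaRatio t * fun x => (x + t) / x := by
    filter_upwards [eventually_gt_atTop 0, eventually_gt_atTop (-t)] with x hx hxt
    exact gammaRatio_add_one hx.ne' (by linarith)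
  constructor
  · intro h
    refine (isBigO_div_sub_one hinv h hshift).congr' ?_ EventuallyEq.rfl
    filter_upwards [heq, eventually_gt_atTop 0, eventually_gt_atTop (-t)] with x hx hx0 hxt
    simp only [Pi.sub_apply, Pi.div_apply, hx, Pi.mul_apply]
    rw [mul_div_cancel_right₀ _ (div_pos (by linarith) hx0).ne']
  · intro h
    exact (isBigO_mul_sub_one (hinv.isBigO_one ℝ) h hshift).congr'
      (heq.symm.sub EventuallyEq.rfl) EventuallyEq.rfl

theorem isBigO_gammaRatio_add_intCast_iff (t : ℝ) (n : ℤ) :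
    (gammaRatio (t + n) - 1) =O[atTop] (·⁻¹) ↔ (gammaRatio t - 1) =O[atTop] (·⁻¹) := by
  induction n using Int.induction_on with
  | zero => simp
  | succ k ih =>
    rw [← ih, Int.cast_add, Int.cast_one, ← add_assoc, isBigO_gammaRatio_add_one_iff]
  | pred k ih =>
    have hk : t + ((-k - 1 : ℤ) : ℝ) + 1 = t + ((-k : ℤ) : ℝ) := by push_cast; ring
    rw [← ih, ← isBigO_gammaRatio_add_one_iff, hk]

theorem isBigO_gammaRatio_sub_one (t : ℝ) : (gammaRatio t - 1) =O[atTop] (·⁻¹) := by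
  rw [← Int.fract_add_floor t, isBigO_gammaRatio_add_intCast_iff]
  refine isBigO_iff.2 ⟨Int.fract t, ?_⟩
  filter_upwards [eventually_gt_atTop 0] with x hx
  rw [Real.norm_eq_abs, Real.norm_eq_abs, abs_inv, abs_of_pos hx, ← div_eq_mul_inv]
  exact abs_gammaRatio_sub_one_le hx ⟨Int.fract_nonneg t, (Int.fract_lt_one t).le⟩

theorem exists_abs_le_div_of_isBigO_inv {f : ℝ → ℝ} (h : f =O[atTop] (·⁻¹)) :
    ∃ C A : ℝ, 0 < C ∧ 0 < A ∧ ∀ x, A ≤ x → |f x| ≤ C / x := by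
  obtain ⟨C, hC, hCf⟩ := h.exists_pos
  obtain ⟨A, hA⟩ := eventually_atTop.1 hCf.bound
  refine ⟨C, max A 1, hC, by positivity, fun x hx => ?_⟩
  have hx0 : 0 < x := by linarith [le_max_right A 1]
  simpa [abs_of_pos hx0, div_eq_mul_inv] using hA x (le_of_max_le_left hx)

/-- `Γ(α+μ)/Γ(α+ν) = α^{μ-ν}(1 + O(1/α))` as `α → +∞`: there exist
constants `C, A > 0` with `|Γ(α+μ)/Γ(α+ν) · α^{ν-μ} − 1| ≤ C/α` for all `α ≥ A`. -/
theorem stmt2 (μ ν : ℝ) :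
    ∃ C A : ℝ, 0 < C ∧ 0 < A ∧ ∀ α : ℝ, A ≤ α →
      |Real.Gamma (α + μ) / Real.Gamma (α + ν) * α ^ (ν - μ) - 1| ≤ C / α := by
  obtain ⟨C, A, hC, hA, hbound⟩ := exists_abs_le_div_of_isBigO_inv <|
    isBigO_div_sub_one tendsto_inv_atTop_zero (isBigO_gammaRatio_sub_one μ)
      (isBigO_gammaRatio_sub_one ν)
  refine ⟨C, A, hC, hA, fun α hα => ?_⟩
  rw [← gammaRatio_div_gammaRatio (hA.trans_le hα)]
  exact hbound α hα
end

section
/- Define L_δ(λ) := ∫_0^1 (1−t)^λ / (√t · (3+t)^{3λ+δ}) dt for δ ∈ ℝ and λ > 0. Then for each fixed δ, L_δ(λ) = 3^{−3λ−δ} √(π/(2λ)) (1 + O(1/λ)) as λ → +∞. -/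
/-!
Multiplying by `3 ^ (3λ + δ)` turns the integrand into `w(t) R(t)`, where
`w(t) = t^(-1/2) e^(-2λt)` is a Gamma-type weight and `R(t) = exp(-λ(ψ(t) - 2t) - δ log(1 + t/3))`,
with `ψ(t) = 3 log(1 + t/3) - log(1 - t) = φ(t) - φ(0)` the Laplace phase. Comparing derivatives
gives `2t ≤ ψ(t)` on `[0, 1)` and `ψ(t) ≤ 2t + t²` on `[0, 1/2]`; hence, with `A = e^(|δ|/3) - 1`,
`R(t) ≤ 1 + At` on `(0, 1)` and `R(t) ≥ 1 - At - λt²` on `(0, 1/2)`. Integrating these against `w`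
(the tail `t ≥ 1/2` is absorbed by `w ≤ 2tw`) bounds `∫₀¹ wR - ∫₀^∞ w` by the moments
`∫₀^∞ tᵏ w = Γ(k + 1/2) (2λ)^(-k-1/2)`, which after normalising by `√(2λ/π)` are `1`, `1/(4λ)` and
`3/(16λ²)`.
-/

open MeasureTheory

/-- `L_δ(λ) := ∫_0^1 (1−t)^λ / (√t (3+t)^{3λ+δ}) dt`. -/
noncomputable def Lint (δ lam : ℝ) : ℝ :=
  ∫ t in Set.Ioo (0:ℝ) 1, (1 - t) ^ lam / (Real.sqrt t * (3 + t) ^ (3 * lam + δ))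

open Set Real
open scoped Nat

lemma le_of_hasDerivAt_le {f g f' g' : ℝ → ℝ} {a b : ℝ} (hab : a ≤ b)
    (hf : ∀ x ∈ Icc a b, HasDerivAt f (f' x) x) (hg : ∀ x ∈ Icc a b, HasDerivAt g (g' x) x)
    (ha : f a ≤ g a) (hle : ∀ x ∈ Ico a b, f' x ≤ g' x) : f b ≤ g b :=
  image_le_of_deriv_right_le_deriv_boundary
    (fun x hx => (hf x hx).continuousAt.continuousWithinAt)
    (fun x hx => (hf x (Ico_subset_Icc_self hx)).hasDerivWithinAt) ha
    (fun x hx => (hg x hx).continuousAt.continuousWithinAt)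
    (fun x hx => (hg x (Ico_subset_Icc_self hx)).hasDerivWithinAt) hle ⟨hab, le_rfl⟩

section
variable {w R : ℝ → ℝ} {A B : ℝ}

lemma setIntegral_Ici_le_inv_mul_setIntegral_mul {c : ℝ} (hc : 0 < c)
    (hw0 : ∀ t ∈ Ioi 0, 0 ≤ w t) (hw : IntegrableOn w (Ioi 0))
    (hw1 : IntegrableOn (fun t => t * w t) (Ioi 0)) :
    ∫ t in Ici c, w t ≤ c⁻¹ * ∫ t in Ioi 0, t * w t := by
  have hsub : Ici c ⊆ Ioi 0 := Ici_subset_Ioi.2 hc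
  calc ∫ t in Ici c, w t ≤ ∫ t in Ici c, c⁻¹ * (t * w t) := by
        refine setIntegral_mono_on (hw.mono_set hsub) ((hw1.mono_set hsub).const_mul _)
          measurableSet_Ici fun t ht => ?_
        rw [← mul_assoc]
        exact le_mul_of_one_le_left (hw0 t (hsub ht)) ((one_le_inv_mul₀ hc).2 ht)
    _ = c⁻¹ * ∫ t in Ici c, t * w t := integral_const_mul _ _
    _ ≤ c⁻¹ * ∫ t in Ioi 0, t * w t := by
        refine mul_le_mul_of_nonneg_left (setIntegral_mono_set hw1 ?_ hsub.eventuallyLE)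
          (inv_nonneg.2 hc.le)
        filter_upwards [ae_restrict_mem measurableSet_Ioi] with t ht
        exact mul_nonneg (le_of_lt ht) (hw0 t ht)

lemma integrableOn_Ioo_mul_of_le (hw0 : ∀ t ∈ Ioi 0, 0 ≤ w t)
    (hw : IntegrableOn w (Ioi 0)) (hw1 : IntegrableOn (fun t => t * w t) (Ioi 0))
    (hRm : AEStronglyMeasurable R (volume.restrict (Ioo 0 1)))
    (hR0 : ∀ t ∈ Ioo 0 1, 0 ≤ R t) (hRup : ∀ t ∈ Ioo 0 1, R t ≤ 1 + A * t) :
    IntegrableOn (fun t => w t * R t) (Ioo 0 1) := by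
  refine Integrable.mono' ((hw.fun_add (hw1.const_mul A)).mono_set Ioo_subset_Ioi_self)
    ((hw.mono_set Ioo_subset_Ioi_self).aestronglyMeasurable.mul hRm) ?_
  filter_upwards [ae_restrict_mem measurableSet_Ioo] with t ht
  have hwt := hw0 t ht.1
  rw [Real.norm_eq_abs, abs_of_nonneg (mul_nonneg hwt (hR0 t ht))]
  nlinarith [mul_le_mul_of_nonneg_left (hRup t ht) hwt]

lemma setIntegral_Ioo_mul_le (hA : 0 ≤ A) (hw0 : ∀ t ∈ Ioi 0, 0 ≤ w t)
    (hw : IntegrableOn w (Ioi 0)) (hw1 : IntegrableOn (fun t => t * w t) (Ioi 0))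
    (hint : IntegrableOn (fun t => w t * R t) (Ioo 0 1))
    (hRup : ∀ t ∈ Ioo 0 1, R t ≤ 1 + A * t) :
    ∫ t in Ioo 0 1, w t * R t ≤ (∫ t in Ioi 0, w t) + A * ∫ t in Ioi 0, t * w t := by
  have hmaj := hw.fun_add (hw1.const_mul A)
  calc ∫ t in Ioo 0 1, w t * R t ≤ ∫ t in Ioo 0 1, (w t + A * (t * w t)) := by
        refine setIntegral_mono_on hint (hmaj.mono_set Ioo_subset_Ioi_self) measurableSet_Ioo
          fun t ht => ?_
        nlinarith [mul_le_mul_of_nonneg_left (hRup t ht) (hw0 t ht.1)]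
    _ ≤ ∫ t in Ioi 0, (w t + A * (t * w t)) := by
        refine setIntegral_mono_set hmaj ?_ Ioo_subset_Ioi_self.eventuallyLE
        filter_upwards [ae_restrict_mem measurableSet_Ioi] with t ht
        exact add_nonneg (hw0 t ht) (mul_nonneg hA (mul_nonneg (le_of_lt ht) (hw0 t ht)))
    _ = (∫ t in Ioi 0, w t) + A * ∫ t in Ioi 0, t * w t := by
        rw [integral_add hw (hw1.const_mul A), integral_const_mul]

lemma le_setIntegral_Ioo_mul (hA : 0 ≤ A) (hB : 0 ≤ B) (hw0 : ∀ t ∈ Ioi 0, 0 ≤ w t)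
    (hw : IntegrableOn w (Ioi 0)) (hw1 : IntegrableOn (fun t => t * w t) (Ioi 0))
    (hw2 : IntegrableOn (fun t => t ^ 2 * w t) (Ioi 0))
    (hint : IntegrableOn (fun t => w t * R t) (Ioo 0 1)) (hR0 : ∀ t ∈ Ioo 0 1, 0 ≤ R t)
    (hRlow : ∀ t ∈ Ioo 0 (1 / 2), 1 - A * t - B * t ^ 2 ≤ R t) :
    (∫ t in Ioi 0, w t) - (A + 2) * (∫ t in Ioi 0, t * w t) - B * ∫ t in Ioi 0, t ^ 2 * w t
      ≤ ∫ t in Ioo 0 1, w t * R t := by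
  have hsub : Ioo (0 : ℝ) (1 / 2) ⊆ Ioi 0 := Ioo_subset_Ioi_self
  have hrem : IntegrableOn (fun t => A * (t * w t) + B * (t ^ 2 * w t)) (Ioi 0) :=
    (hw1.const_mul A).fun_add (hw2.const_mul B)
  have hhalf : (0 : ℝ) < 1 / 2 := by norm_num
  have hsplit :
      ∫ t in Ioo 0 (1 / 2), w t = (∫ t in Ioi 0, w t) - ∫ t in Ici (1 / 2), w t := by
    rw [← Ioo_union_Ici_eq_Ioi hhalf, setIntegral_union
      (Iio_disjoint_Ici le_rfl |>.mono_left Ioo_subset_Iio_self) measurableSet_Ici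
      (hw.mono_set hsub) (hw.mono_set (Ici_subset_Ioi.2 hhalf)), add_sub_cancel_right]
  have htail := setIntegral_Ici_le_inv_mul_setIntegral_mul hhalf hw0 hw hw1
  rw [one_div, inv_inv] at htail
  have hhead : ∫ t in Ioo 0 (1 / 2), (A * (t * w t) + B * (t ^ 2 * w t))
      ≤ A * (∫ t in Ioi 0, t * w t) + B * ∫ t in Ioi 0, t ^ 2 * w t := by
    rw [← integral_const_mul, ← integral_const_mul,
      ← integral_add (hw1.const_mul A) (hw2.const_mul B)]
    refine setIntegral_mono_set hrem ?_ hsub.eventuallyLE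
    filter_upwards [ae_restrict_mem measurableSet_Ioi] with t ht
    exact add_nonneg (mul_nonneg hA (mul_nonneg (le_of_lt ht) (hw0 t ht)))
      (mul_nonneg hB (mul_nonneg (sq_nonneg t) (hw0 t ht)))
  calc (∫ t in Ioi 0, w t) - (A + 2) * (∫ t in Ioi 0, t * w t) - B * ∫ t in Ioi 0, t ^ 2 * w t
      ≤ (∫ t in Ioo 0 (1 / 2), w t)
          - ∫ t in Ioo 0 (1 / 2), (A * (t * w t) + B * (t ^ 2 * w t)) := by
        linarith
    _ = ∫ t in Ioo 0 (1 / 2), (w t - (A * (t * w t) + B * (t ^ 2 * w t))) :=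
        (integral_sub (hw.mono_set hsub) (hrem.mono_set hsub)).symm
    _ ≤ ∫ t in Ioo 0 (1 / 2), w t * R t := by
        refine setIntegral_mono_on ((hw.fun_sub hrem).mono_set hsub)
          (hint.mono_set (Ioo_subset_Ioo_right (by norm_num))) measurableSet_Ioo fun t ht => ?_
        nlinarith [mul_le_mul_of_nonneg_left (hRlow t ht) (hw0 t ht.1)]
    _ ≤ ∫ t in Ioo 0 1, w t * R t := by
        refine setIntegral_mono_set hint ?_ (Ioo_subset_Ioo_right (by norm_num)).eventuallyLE
        filter_upwards [ae_restrict_mem measurableSet_Ioo] with t ht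
        exact mul_nonneg (hw0 t ht.1) (hR0 t ht)

lemma abs_setIntegral_Ioo_mul_sub_le (hA : 0 ≤ A) (hB : 0 ≤ B)
    (hw0 : ∀ t ∈ Ioi 0, 0 ≤ w t)
    (hw : IntegrableOn w (Ioi 0)) (hw1 : IntegrableOn (fun t => t * w t) (Ioi 0))
    (hw2 : IntegrableOn (fun t => t ^ 2 * w t) (Ioi 0))
    (hRm : AEStronglyMeasurable R (volume.restrict (Ioo 0 1))) (hR0 : ∀ t ∈ Ioo 0 1, 0 ≤ R t)
    (hRup : ∀ t ∈ Ioo 0 1, R t ≤ 1 + A * t)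
    (hRlow : ∀ t ∈ Ioo 0 (1 / 2), 1 - A * t - B * t ^ 2 ≤ R t) :
    |(∫ t in Ioo 0 1, w t * R t) - ∫ t in Ioi 0, w t|
      ≤ (A + 2) * (∫ t in Ioi 0, t * w t) + B * ∫ t in Ioi 0, t ^ 2 * w t := by
  have hint := integrableOn_Ioo_mul_of_le hw0 hw hw1 hRm hR0 hRup
  have h1 : 0 ≤ ∫ t in Ioi 0, t * w t :=
    setIntegral_nonneg measurableSet_Ioi fun t ht => mul_nonneg (le_of_lt ht) (hw0 t ht)
  have h2 : 0 ≤ ∫ t in Ioi 0, t ^ 2 * w t :=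
    setIntegral_nonneg measurableSet_Ioi fun t ht => mul_nonneg (sq_nonneg t) (hw0 t ht)
  rw [abs_sub_le_iff]
  constructor
  · linarith [setIntegral_Ioo_mul_le hA hw0 hw hw1 hint hRup, mul_nonneg hB h2]
  · linarith [le_setIntegral_Ioo_mul hA hB hw0 hw hw1 hw2 hint hR0 hRlow]

end

noncomputable def laplaceWeight (b t : ℝ) : ℝ := t ^ (-(1 / 2) : ℝ) * exp (-(b * t))

lemma laplaceWeight_nonneg (b : ℝ) {t : ℝ} (ht : 0 ≤ t) : 0 ≤ laplaceWeight b t :=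
  mul_nonneg (rpow_nonneg ht _) (exp_pos _).le

lemma pow_mul_laplaceWeight (b : ℝ) (k : ℕ) {t : ℝ} (ht : 0 < t) :
    t ^ k * laplaceWeight b t = t ^ ((k + 1 / 2 : ℝ) - 1) * exp (-(b * t)) := by
  rw [laplaceWeight, ← mul_assoc, ← rpow_natCast, ← rpow_add ht]
  ring_nf

lemma integrableOn_pow_mul_laplaceWeight {b : ℝ} (hb : 0 < b) (k : ℕ) :
    IntegrableOn (fun t => t ^ k * laplaceWeight b t) (Ioi 0) := by
  have hs : -1 < (k + 1 / 2 : ℝ) - 1 := by linarith [k.cast_nonneg (α := ℝ)]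
  refine (integrableOn_rpow_mul_exp_neg_mul_rpow hs one_pos hb).congr_fun (fun t ht => ?_)
    measurableSet_Ioi
  simp only [pow_mul_laplaceWeight b k ht, rpow_one, neg_mul]

lemma sqrt_div_pi_mul_integral_pow_mul_laplaceWeight {b : ℝ} (hb : 0 < b) (k : ℕ) :
    √(b / π) * ∫ t in Ioi 0, t ^ k * laplaceWeight b t
      = (2 * k - 1 : ℕ)‼ / (2 * b) ^ k := by
  rw [setIntegral_congr_fun measurableSet_Ioi fun t ht => pow_mul_laplaceWeight b k ht,
    integral_rpow_mul_exp_neg_mul_Ioi (by positivity) hb, Gamma_nat_add_half,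
    rpow_add (by positivity), rpow_natCast, sqrt_div' _ pi_pos.le, ← sqrt_eq_rpow, one_div,
    inv_pow, sqrt_inv]
  field_simp
  ring

lemma abs_sqrt_div_pi_mul_sub_one_le {b C D I : ℝ} (hb : 0 < b)
    (h : |I - ∫ t in Ioi 0, laplaceWeight b t|
      ≤ C * (∫ t in Ioi 0, t * laplaceWeight b t)
        + D * ∫ t in Ioi 0, t ^ 2 * laplaceWeight b t) :
    |√(b / π) * I - 1| ≤ C / (2 * b) + 3 * D / (2 * b) ^ 2 := by
  have hm := sqrt_div_pi_mul_integral_pow_mul_laplaceWeight hb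
  have h0 : √(b / π) * ∫ t in Ioi 0, laplaceWeight b t = 1 := by simpa using hm 0
  have h1 : √(b / π) * ∫ t in Ioi 0, t * laplaceWeight b t = 1 / (2 * b) := by
    simpa using hm 1
  have h2 : √(b / π) * ∫ t in Ioi 0, t ^ 2 * laplaceWeight b t = 3 / (2 * b) ^ 2 := by
    simpa using hm 2
  calc |√(b / π) * I - 1| = √(b / π) * |I - ∫ t in Ioi 0, laplaceWeight b t| := by
        rw [← h0, ← mul_sub, abs_mul, abs_of_nonneg (sqrt_nonneg _)]
    _ ≤ √(b / π) * (C * (∫ t in Ioi 0, t * laplaceWeight b t)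
          + D * ∫ t in Ioi 0, t ^ 2 * laplaceWeight b t) :=
        mul_le_mul_of_nonneg_left h (sqrt_nonneg _)
    _ = C / (2 * b) + 3 * D / (2 * b) ^ 2 := by
        rw [mul_add, mul_left_comm, h1, mul_left_comm, h2]
        ring

namespace Lint

noncomputable def phase (t : ℝ) : ℝ := 3 * log (1 + t / 3) - log (1 - t)

lemma hasDerivAt_phase {x : ℝ} (hx : x ∈ Ioo (-3) 1) :
    HasDerivAt phase (1 / (1 + x / 3) + 1 / (1 - x)) x := by
  have h3 : 1 + x / 3 ≠ 0 := by linarith [hx.1]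
  have h1 : 1 - x ≠ 0 := by linarith [hx.2]
  have h := ((((hasDerivAt_id x).div_const 3).const_add 1).log h3).const_mul 3 |>.sub
    (((hasDerivAt_id x).const_sub 1).log h1)
  refine h.congr_deriv ?_
  simp only [id]
  field_simp
  ring

lemma two_mul_le_phase {t : ℝ} (ht : t ∈ Ico 0 1) : 2 * t ≤ phase t := by
  refine le_of_hasDerivAt_le ht.1 (f' := fun _ => 2)
    (fun x _ => by simpa using (hasDerivAt_id x).const_mul (2 : ℝ))
    (fun x hx => hasDerivAt_phase ⟨by linarith [hx.1], by linarith [hx.2, ht.2]⟩)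
    (by simp [phase]) fun x hx => ?_
  have hx1 : 0 < 1 - x := by linarith [hx.2, ht.2]
  have hx3 : 0 < 1 + x / 3 := by linarith [hx.1]
  rw [div_add_div _ _ hx3.ne' hx1.ne', le_div_iff₀ (mul_pos hx3 hx1)]
  nlinarith [hx.1]

lemma phase_le {t : ℝ} (ht : t ∈ Icc 0 (1 / 2)) : phase t ≤ 2 * t + t ^ 2 := by
  refine le_of_hasDerivAt_le ht.1
    (fun x hx => hasDerivAt_phase ⟨by linarith [hx.1], by linarith [hx.2, ht.2]⟩)
    (g' := fun x => 2 + 2 * x)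
    (fun x _ => by simpa using ((hasDerivAt_id x).const_mul (2 : ℝ)).add (hasDerivAt_pow 2 x))
    (by simp [phase]) fun x hx => ?_
  have hx1 : 0 < 1 - x := by linarith [hx.2, ht.2]
  have hx3 : 0 < 1 + x / 3 := by linarith [hx.1]
  rw [div_add_div _ _ hx3.ne' hx1.ne', div_le_iff₀ (mul_pos hx3 hx1)]
  have hx2 : x ≤ 1 / 2 := by linarith [hx.2, ht.2]
  nlinarith [mul_nonneg hx.1 (show 0 ≤ 2 - 3 * x - x ^ 2 by nlinarith [hx.1])]

noncomputable def correction (δ lam t : ℝ) : ℝ :=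
  exp (-(lam * (phase t - 2 * t)) - δ * log (1 + t / 3))

lemma abs_mul_log_one_add_div_three_le (δ : ℝ) {t : ℝ} (ht : 0 ≤ t) :
    |δ * log (1 + t / 3)| ≤ |δ| / 3 * t := by
  have h0 : 0 ≤ log (1 + t / 3) := log_nonneg (by linarith)
  have h1 : log (1 + t / 3) ≤ t / 3 := by
    linarith [log_le_sub_one_of_pos (show 0 < 1 + t / 3 by linarith)]
  rw [abs_mul, abs_of_nonneg h0]
  nlinarith [abs_nonneg δ]

lemma correction_le (δ : ℝ) {lam t : ℝ} (hlam : 0 ≤ lam) (ht : t ∈ Ico 0 1) :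
    correction δ lam t ≤ 1 + (exp (|δ| / 3) - 1) * t := by
  have hexp : -(lam * (phase t - 2 * t)) - δ * log (1 + t / 3) ≤ t * (|δ| / 3) := by
    have := mul_nonneg hlam (sub_nonneg.2 (two_mul_le_phase ht))
    linarith [neg_abs_le (δ * log (1 + t / 3)), abs_mul_log_one_add_div_three_le δ ht.1]
  have hconv := convexOn_exp.2 (mem_univ (|δ| / 3)) (mem_univ 0) ht.1
    (sub_nonneg.2 ht.2.le) (add_sub_cancel t 1)
  simp only [smul_eq_mul, mul_zero, add_zero, exp_zero, mul_one] at hconv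
  calc correction δ lam t ≤ exp (t * (|δ| / 3)) := exp_le_exp.2 hexp
    _ ≤ 1 + (exp (|δ| / 3) - 1) * t := by linarith

lemma le_correction (δ : ℝ) {lam t : ℝ} (hlam : 0 ≤ lam) (ht : t ∈ Icc 0 (1 / 2)) :
    1 - (exp (|δ| / 3) - 1) * t - lam * t ^ 2 ≤ correction δ lam t := by
  have hexp :
      -(lam * t ^ 2) - |δ| / 3 * t ≤ -(lam * (phase t - 2 * t)) - δ * log (1 + t / 3) := by
    have := mul_le_mul_of_nonneg_left (sub_le_iff_le_add'.2 (phase_le ht)) hlam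
    linarith [le_abs_self (δ * log (1 + t / 3)), abs_mul_log_one_add_div_three_le δ ht.1]
  have hA : |δ| / 3 * t ≤ (exp (|δ| / 3) - 1) * t :=
    mul_le_mul_of_nonneg_right (by linarith [add_one_le_exp (|δ| / 3)]) ht.1
  rw [correction]
  linarith [add_one_le_exp (-(lam * t ^ 2) - |δ| / 3 * t), exp_le_exp.2 hexp]

lemma three_rpow_mul_integrand_eq {δ lam t : ℝ} (ht : t ∈ Ioo 0 1) :
    3 ^ (3 * lam + δ) * ((1 - t) ^ lam / (√t * (3 + t) ^ (3 * lam + δ)))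
      = laplaceWeight (2 * lam) t * correction δ lam t := by
  have h1t : 0 < 1 - t := by linarith [ht.2]
  have h3t : 0 < 3 + t := by linarith [ht.1]
  have hlog : log (1 + t / 3) = log (3 + t) - log 3 := by
    rw [← log_div h3t.ne' three_ne_zero]; ring_nf
  rw [laplaceWeight, correction, phase, hlog, rpow_def_of_pos three_pos, rpow_def_of_pos h1t,
    rpow_def_of_pos h3t, rpow_neg ht.1.le, ← sqrt_eq_rpow, div_eq_mul_inv, mul_inv, ← exp_neg,
    mul_left_comm (exp (log (1 - t) * _)), mul_left_comm (exp (log 3 * _)), ← exp_add,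
    ← exp_add, mul_assoc (√t)⁻¹, ← exp_add]
  congr 2
  ring

lemma measurable_correction (δ lam : ℝ) : Measurable (correction δ lam) := by
  unfold correction phase
  fun_prop

lemma three_rpow_mul_eq_integral (δ lam : ℝ) :
    3 ^ (3 * lam + δ) * Lint δ lam
      = ∫ t in Ioo 0 1, laplaceWeight (2 * lam) t * correction δ lam t := by
  rw [Lint, ← integral_const_mul]
  exact setIntegral_congr_fun measurableSet_Ioo fun t ht => three_rpow_mul_integrand_eq ht

end Lint

/-- for each fixed `δ`, `L_δ(λ) = 3^{−3λ−δ} √(π/(2λ)) (1 + O(1/λ))` as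
`λ → +∞`: there exist `C, Λ > 0` with `|3^{3λ+δ} √(2λ/π) L_δ(λ) − 1| ≤ C/λ` for `λ ≥ Λ`. -/
theorem stmt13 (δ : ℝ) :
    ∃ C Λ : ℝ, 0 < C ∧ 0 < Λ ∧ ∀ lam : ℝ, Λ ≤ lam →
      |3 ^ (3 * lam + δ) * Real.sqrt (2 * lam / Real.pi) * Lint δ lam - 1| ≤ C / lam := by
  set A := exp (|δ| / 3) - 1
  have hA : 0 ≤ A := sub_nonneg.2 (one_le_exp (by positivity))
  refine ⟨(A + 2) / 4 + 3 / 16, 1, by positivity, one_pos, fun lam hlam => ?_⟩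
  have hlam : 0 < lam := by linarith
  have hb : 0 < 2 * lam := by linarith
  have hbound := abs_setIntegral_Ioo_mul_sub_le hA hlam.le
    (fun t ht => laplaceWeight_nonneg (2 * lam) (le_of_lt ht))
    (by simpa using integrableOn_pow_mul_laplaceWeight hb 0)
    (by simpa using integrableOn_pow_mul_laplaceWeight hb 1)
    (integrableOn_pow_mul_laplaceWeight hb 2)
    (Lint.measurable_correction δ lam).aestronglyMeasurable (fun t _ => (exp_pos _).le)
    (fun t ht => Lint.correction_le δ hlam.le (Ioo_subset_Ico_self ht))
    (fun t ht => Lint.le_correction δ hlam.le (Ioo_subset_Icc_self ht))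
  rw [mul_right_comm, mul_comm, Lint.three_rpow_mul_eq_integral]
  calc _ ≤ (A + 2) / (2 * (2 * lam)) + 3 * lam / (2 * (2 * lam)) ^ 2 :=
        abs_sqrt_div_pi_mul_sub_one_le hb hbound
    _ = ((A + 2) / 4 + 3 / 16) / lam := by
        field_simp
        ring
end

section
/- Let 1 ≤ b ≤ c and define D_{b,c}(ξ,η) := (1 − ξ − η)(ξ + η) / (ξ η (1 − bξ)(1 − cη)) on the domain Δ_{b,c} := {(ξ,η) ∈ (0,1/b) × (0,1/c) : ξ + η < 1}. Then for b = c = 2, D_{2,2} attains its minimum on Δ_{2,2} at (ξ,η) = (1/4, 1/4), with minimum value D_{2,2}(1/4,1/4) = 16. -/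
/-!
Put `s = ξ + η`. AM-GM applied to the pairs `(ξ, η)` and `(1 - 2ξ, 1 - 2η)` bounds the denominator
by `s² (1 - s)² / 4`, so `D_{2,2}(ξ, η) ≥ 4 / (s (1 - s))`, and `s (1 - s) ≤ 1/4` gives the bound `16`.
-/

lemma mul_mul_one_sub_two_mul_le_sq {ξ η : ℝ} (hξ : ξ < 1 / 2) (hη : η < 1 / 2) :
    16 * (ξ * η * (1 - 2 * ξ) * (1 - 2 * η)) ≤ 4 * ((ξ + η) * (1 - ξ - η)) ^ 2 := by
  have hprod : 4 * ξ * η ≤ (ξ + η) ^ 2 := four_mul_le_sq_add ξ η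
  have hcoprod : 4 * (1 - 2 * ξ) * (1 - 2 * η) ≤ (2 * (1 - ξ - η)) ^ 2 := by
    linear_combination four_mul_le_sq_add (1 - 2 * ξ) (1 - 2 * η)
  have hcoprod_nonneg : 0 ≤ 4 * (1 - 2 * ξ) * (1 - 2 * η) := by
    have : 0 < 1 - 2 * ξ := by linarith
    have : 0 < 1 - 2 * η := by linarith
    positivity
  calc 16 * (ξ * η * (1 - 2 * ξ) * (1 - 2 * η))
      = (4 * ξ * η) * (4 * (1 - 2 * ξ) * (1 - 2 * η)) := by ring
    _ ≤ (ξ + η) ^ 2 * (2 * (1 - ξ - η)) ^ 2 :=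
        mul_le_mul hprod hcoprod hcoprod_nonneg (sq_nonneg _)
    _ = 4 * ((ξ + η) * (1 - ξ - η)) ^ 2 := by ring

lemma four_mul_sq_le_self {t : ℝ} (h₀ : 0 ≤ t) (h₁ : 4 * t ≤ 1) : 4 * t ^ 2 ≤ t := by
  nlinarith

/-- on `Δ_{2,2} = {(ξ,η) ∈ (0,1/2)×(0,1/2) : ξ+η < 1}`, the function
`D_{2,2}(ξ,η) = (1−ξ−η)(ξ+η)/(ξη(1−2ξ)(1−2η))` attains its minimum at `(1/4,1/4)`,
with minimum value `16`. -/
theorem stmt15 :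
    ((1 - (1/4 : ℝ) - 1/4) * (1/4 + 1/4)) /
        ((1/4 : ℝ) * (1/4) * (1 - 2 * (1/4)) * (1 - 2 * (1/4))) = 16 ∧
    ∀ ξ η : ℝ, ξ ∈ Set.Ioo (0:ℝ) (1/2) → η ∈ Set.Ioo (0:ℝ) (1/2) → ξ + η < 1 →
      16 ≤ ((1 - ξ - η) * (ξ + η)) / (ξ * η * (1 - 2 * ξ) * (1 - 2 * η)) := by
  refine ⟨by norm_num, ?_⟩
  rintro ξ η ⟨hξ, hξ'⟩ ⟨hη, hη'⟩ hsum
  have hden : 0 < ξ * η * (1 - 2 * ξ) * (1 - 2 * η) := by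
    have : 0 < 1 - 2 * ξ := by linarith
    have : 0 < 1 - 2 * η := by linarith
    positivity
  have ht₀ : 0 ≤ (ξ + η) * (1 - ξ - η) := mul_nonneg (by linarith) (by linarith)
  have ht₁ : 4 * ((ξ + η) * (1 - ξ - η)) ≤ 1 := by
    linear_combination four_mul_le_sq_add (ξ + η) (1 - ξ - η)
  rw [le_div_iff₀ hden]
  calc 16 * (ξ * η * (1 - 2 * ξ) * (1 - 2 * η))
      ≤ 4 * ((ξ + η) * (1 - ξ - η)) ^ 2 := mul_mul_one_sub_two_mul_le_sq hξ' hη'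
    _ ≤ (ξ + η) * (1 - ξ - η) := four_mul_sq_le_self ht₀ ht₁
    _ = (1 - ξ - η) * (ξ + η) := mul_comm _ _
end
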